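/- The number of pairs (P₁,P₂) of non-intersecting upright lattice paths with P₁ from (0,0) to (n,n), P₂ from (1,−1) to (n+1,n−1), both staying weakly below the diagonal (avoiding all points (x,y) with y > x), equals C_{n+2}·C_n − C_{n+1}², where C_m is the m-th Catalan number. -/

import Mathlib

/-- An upright lattice path with `m` unit steps `(1,0)` or `(0,1)` in `ℤ × ℤ`,
from `s` to `t`, recorded as the sequence of its `m+1` visited points. -/
def IsPathZ (m : ℕ) (s t : ℤ × ℤ) (p : Fin (m + 1) → ℤ × ℤ) : Prop :=
  p 0 = s ∧ p (Fin.last m) = t ∧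
    ∀ i : Fin m, p i.succ = p i.castSucc + (1, 0) ∨ p i.succ = p i.castSucc + (0, 1)

/-- The path stays weakly below the diagonal: every visited `(x,y)` has `y ≤ x`. -/
def BelowDiag {m : ℕ} (p : Fin (m + 1) → ℤ × ℤ) : Prop := ∀ i, (p i).2 ≤ (p i).1

/-- Two paths are non-intersecting if they share no point. -/
def NoninterZ {m : ℕ} (p q : Fin (m + 1) → ℤ × ℤ) : Prop := ∀ i j, p i ≠ q j

/-!
Encode a lattice path by its sequence of east/north steps and record its height `x - y`; the
paths of the theorem become walks with steps `±1` staying at height `≥ 0`, the first from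
height `0` to `0`, the second from `2` to `2`, and disjointness of the paths means that the
walks never meet. The reflection principle counts nonnegative walks from `a` to `b` as a
difference of two binomial coefficients, and the Gessel–Viennot involution (exchanging tails
at the first meeting point) shows that the number of never-meeting pairs is the `2 × 2`
determinant of such counts. Writing every binomial coefficient and Catalan number involved
as a rational multiple of `C(2n, n)` turns the resulting identity into one between rational
functions of `n`.
-/

open Finset

theorem exists_eq_of_le_of_step (u : ℕ → ℤ) (hstep : ∀ k, u k - 1 ≤ u (k + 1)) {c : ℤ}
    (h0 : c ≤ u 0) : ∀ K, u K ≤ c → ∃ k ≤ K, u k = c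
  | 0, hK => ⟨0, le_rfl, by omega⟩
  | K + 1, hK => by
    by_cases hK' : u K ≤ c
    · obtain ⟨k, hk, hu⟩ := exists_eq_of_le_of_step u hstep h0 K hK'
      exact ⟨k, by omega, hu⟩
    · exact ⟨K + 1, le_rfl, by have := hstep K; omega⟩

theorem sInf_setOf_eq_of_iff {P Q : ℕ → Prop} {T : ℕ} (hT : P T)
    (hPQ : ∀ k ≤ T, P k ↔ Q k) : sInf {k | Q k} = sInf {k | P k} := by
  have hP : sInf {k | P k} ≤ T := Nat.sInf_le hT
  have hQ : Q (sInf {k | P k}) := (hPQ _ hP).1 (Nat.sInf_mem ⟨T, hT⟩)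
  refine le_antisymm (Nat.sInf_le hQ) (le_of_not_gt fun hlt => ?_)
  exact Nat.notMem_of_lt_sInf hlt ((hPQ _ (by omega)).2 (Nat.sInf_mem ⟨_, hQ⟩))

theorem card_filter_card_eq_choose (m c : ℕ) :
    #{s : Fin m → Bool | #{i | s i} = c} = m.choose c := by
  calc #{s : Fin m → Bool | #{i | s i} = c} = #(powersetCard c (univ : Finset (Fin m))) := by
        refine card_bij' (fun s _ => ({i | s i} : Finset (Fin m))) (fun A _ i => decide (i ∈ A))
          ?_ ?_ ?_ ?_
        · intro s hs; simpa using hs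
        · intro A hA; simpa using hA
        · intro s _; ext i; simp
        · intro A _; ext i; simp
    _ = m.choose c := by simp

theorem Nat.cast_choose_succ_mul {R : Type*} [Ring R] (N k : ℕ) :
    (N.choose (k + 1) : R) * (k + 1) = N.choose k * (N - k) := by
  rcases le_or_gt k N with h | h
  · rw [← Nat.cast_sub h]; norm_cast; exact congrArg _ (Nat.choose_succ_right_eq N k)
  · simp [Nat.choose_eq_zero_of_lt h, Nat.choose_eq_zero_of_lt (h.trans k.lt_succ_self)]

theorem ballot_det_eq_catalan_det (n : ℕ) :
    (((2 * n).choose n : ℤ) - (2 * n).choose (n + 1))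
        * ((2 * n).choose n - (2 * n).choose (n + 3))
      - ((2 * n).choose (n + 1) - (2 * n).choose (n + 2)) ^ 2
      = catalan (n + 2) * catalan n - catalan (n + 1) ^ 2 := by
  have h1 : (n : ℚ) + 1 ≠ 0 := by positivity
  have h2 : (n : ℚ) + 2 ≠ 0 := by positivity
  have h3 : (n : ℚ) + 3 ≠ 0 := by positivity
  have hC (j : ℕ) :
      ((2 * n).choose (n + j + 1) : ℚ) * (n + j + 1) = (2 * n).choose (n + j) * (n - j) := by
    have := Nat.cast_choose_succ_mul (R := ℚ) (2 * n) (n + j)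
    push_cast at this; linear_combination this
  have hK (j : ℕ) : (catalan j : ℚ) * (j + 1) = j.centralBinom := by
    rw [mul_comm]; exact_mod_cast succ_mul_catalan_eq_centralBinom j
  have hB (j : ℕ) :
      ((j + 1).centralBinom : ℚ) * (j + 1) = 2 * (2 * j + 1) * j.centralBinom := by
    rw [mul_comm]; exact_mod_cast Nat.succ_mul_centralBinom_succ j
  have hC1 : ((2 * n).choose (n + 1) : ℚ) = (2 * n).choose n * n / (n + 1) :=
    eq_div_of_mul_eq h1 (by linear_combination hC 0)
  have hC2 : ((2 * n).choose (n + 2) : ℚ) = (2 * n).choose (n + 1) * (n - 1) / (n + 2) :=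
    eq_div_of_mul_eq h2 (by linear_combination hC 1)
  have hC3 : ((2 * n).choose (n + 3) : ℚ) = (2 * n).choose (n + 2) * (n - 2) / (n + 3) :=
    eq_div_of_mul_eq h3 (by linear_combination hC 2)
  have hK0 : (catalan n : ℚ) = n.centralBinom / (n + 1) := eq_div_of_mul_eq h1 (hK n)
  have hK1 : (catalan (n + 1) : ℚ) = (n + 1).centralBinom / (n + 2) :=
    eq_div_of_mul_eq h2 (by have := hK (n + 1); push_cast at this; linear_combination this)
  have hK2 : (catalan (n + 2) : ℚ) = (n + 2).centralBinom / (n + 3) :=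
    eq_div_of_mul_eq h3 (by have := hK (n + 2); push_cast at this; linear_combination this)
  have hB1 : ((n + 1).centralBinom : ℚ) = 2 * (2 * n + 1) * n.centralBinom / (n + 1) :=
    eq_div_of_mul_eq h1 (hB n)
  have hB2 : ((n + 2).centralBinom : ℚ) = 2 * (2 * n + 3) * (n + 1).centralBinom / (n + 2) :=
    eq_div_of_mul_eq h2 (by have := hB (n + 1); push_cast at this; linear_combination this)
  suffices h : (((2 * n).choose n : ℚ) - (2 * n).choose (n + 1))
      * ((2 * n).choose n - (2 * n).choose (n + 3))
      - ((2 * n).choose (n + 1) - (2 * n).choose (n + 2)) ^ 2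
      = catalan (n + 2) * catalan n - catalan (n + 1) ^ 2 by exact_mod_cast h
  rw [hC3, hC2, hC1, hK2, hB2, hK1, hB1, hK0, Nat.centralBinom_eq_two_mul_choose]
  field_simp
  ring

namespace LatticeWalk

variable {m : ℕ}

def upStep (s : Fin m → Bool) (i : ℕ) : ℕ := if h : i < m then (s ⟨i, h⟩).toNat else 0

def upCount (s : Fin m → Bool) (k : ℕ) : ℕ := ∑ i ∈ range k, upStep s i

/-- The walk `a = h₀, h₁, …` with steps `+1` (`true`) and `-1` (`false`); past `m` it
keeps descending. -/
def height (a : ℤ) (s : Fin m → Bool) (k : ℕ) : ℤ := a + 2 * upCount s k - k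

variable {s t : Fin m → Bool}

theorem upCount_succ (s : Fin m → Bool) (k : ℕ) :
    upCount s (k + 1) = upCount s k + upStep s k :=
  sum_range_succ _ _

theorem upStep_le_one (s : Fin m → Bool) (i : ℕ) : upStep s i ≤ 1 := by
  unfold upStep; split <;> simp [Bool.toNat_le]

theorem upStep_congr {i : ℕ} (h : ∀ hi : i < m, s ⟨i, hi⟩ = t ⟨i, hi⟩) :
    upStep s i = upStep t i := by
  unfold upStep; split <;> simp [*]

variable (s)

@[simp] theorem height_zero (a : ℤ) : height a s 0 = a := by simp [height, upCount]

theorem height_succ (a : ℤ) (k : ℕ) :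
    height a s (k + 1) = height a s k + 2 * upStep s k - 1 := by
  simp only [height, upCount, sum_range_succ]; push_cast; ring

theorem height_succ_ge (a : ℤ) (k : ℕ) : height a s k - 1 ≤ height a s (k + 1) := by
  rw [height_succ]; omega

theorem height_succ_le (a : ℤ) (k : ℕ) : height a s (k + 1) ≤ height a s k + 1 := by
  rw [height_succ]; have := upStep_le_one s k; omega

theorem height_add (a c : ℤ) (k : ℕ) : height (a + c) s k = height a s k + c := by
  simp only [height]; ring

theorem height_not (a : ℤ) {k : ℕ} (hk : k ≤ m) :
    height (-a) (fun i => !s i) k = -height a s k := by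
  have : upCount (fun i => !s i) k + upCount s k = k := by
    rw [upCount, upCount, ← sum_add_distrib]
    calc ∑ i ∈ range k, (upStep (fun i => !s i) i + upStep s i) = ∑ i ∈ range k, 1 := by
          refine sum_congr rfl fun i hi => ?_
          simp only [upStep, dif_pos (show i < m by simp at hi; omega)]
          cases s _ <;> rfl
      _ = k := by simp
  simp only [height]; omega

variable {s} {j k : ℕ}

theorem height_eq_of_eqOn_prefix (a : ℤ) (hst : ∀ i : Fin m, (i : ℕ) < j → s i = t i)
    (hk : k ≤ j) : height a s k = height a t k := by
  have : upCount s k = upCount t k :=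
    sum_congr rfl fun i hi => upStep_congr fun hi' => hst ⟨i, hi'⟩ (by simp at hi ⊢; omega)
  simp only [height, this]

theorem height_sub_eq_of_eqOn_suffix (a a' : ℤ)
    (hst : ∀ i : Fin m, j ≤ (i : ℕ) → s i = t i) (hk : j ≤ k) :
    height a s k - height a s j = height a' t k - height a' t j := by
  have : ∑ i ∈ Ico j k, upStep s i = ∑ i ∈ Ico j k, upStep t i :=
    sum_congr rfl fun i hi => upStep_congr fun hi' => hst ⟨i, hi'⟩ (by simp at hi ⊢; omega)
  simp only [height, upCount, ← sum_range_add_sum_Ico _ hk, this]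
  push_cast; ring

theorem upCount_eq_card (s : Fin m → Bool) : upCount s m = #{i | s i} := by
  rw [card_filter, upCount, ← Fin.sum_univ_eq_sum_range]
  refine sum_congr rfl fun i _ => ?_
  simp only [upStep, i.isLt, dif_pos]
  cases s i <;> rfl

def walks (m : ℕ) (a b : ℤ) : Finset (Fin m → Bool) := {s | height a s m = b}

def nonnegWalks (m : ℕ) (a b : ℤ) : Finset (Fin m → Bool) :=
  {s ∈ walks m a b | ∀ k ≤ m, 0 ≤ height a s k}

theorem card_walks {a b : ℤ} {c : ℕ} (hc : b - a + m = 2 * c) :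
    #(walks m a b) = m.choose c := by
  rw [← card_filter_card_eq_choose]
  congr 1
  ext s
  simp only [walks, mem_filter, mem_univ, true_and, height, upCount_eq_card]
  omega

theorem card_walks_neg (a b : ℤ) : #(walks m a b) = #(walks m (-a) (-b)) := by
  have hnot : ∀ s : Fin m → Bool, (fun i => !(fun i => !s i) i) = s := fun s => by simp
  refine card_bij' (fun s _ i => !s i) (fun s _ i => !s i) (fun s hs => ?_) (fun s hs => ?_)
    (fun s _ => hnot s) (fun s _ => hnot s)
  · simp only [walks, mem_filter, mem_univ, true_and] at hs ⊢
    rw [height_not _ _ le_rfl, hs]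
  · simp only [walks, mem_filter, mem_univ, true_and] at hs ⊢
    rw [← neg_neg a, height_not _ _ le_rfl, hs, neg_neg]

def flipBefore (T : ℕ) (s : Fin m → Bool) : Fin m → Bool :=
  fun i => if (i : ℕ) < T then !s i else s i

theorem flipBefore_flipBefore (T : ℕ) (s : Fin m → Bool) :
    flipBefore T (flipBefore T s) = s := by
  funext i; simp only [flipBefore]; split <;> simp

section Reflection

variable {a : ℤ} {s : Fin m → Bool} {T k : ℕ}

theorem height_flipBefore_of_le (hTm : T ≤ m) (hk : k ≤ T) :
    height (-a - 2) (flipBefore T s) k = -2 - height a s k := by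
  rw [height_eq_of_eqOn_prefix (s := flipBefore T s) (t := fun i => !s i) _
      (fun i hi => if_pos hi) hk,
    show -a - 2 = -(a + 2) by ring, height_not _ _ (hk.trans hTm), height_add]
  ring

theorem height_flipBefore_of_ge (hT : height a s T = -1) (hTm : T ≤ m) (hk : T ≤ k) :
    height (-a - 2) (flipBefore T s) k = height a s k := by
  have := height_sub_eq_of_eqOn_suffix (s := flipBefore T s) (t := s) (-a - 2) a
    (fun i hi => if_neg (not_lt.mpr hi)) hk
  rw [height_flipBefore_of_le hTm le_rfl] at this
  omega

noncomputable def hitTime (a : ℤ) (s : Fin m → Bool) : ℕ := sInf {k | height a s k = -1}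

/-- Reflection principle: flip every step before the walk first reaches `-1`. -/
noncomputable def reflect (a : ℤ) (s : Fin m → Bool) : Fin m → Bool :=
  flipBefore (hitTime a s) s

theorem hitTime_le (hT : height a s T = -1) : hitTime a s ≤ T := Nat.sInf_le hT

theorem height_hitTime (hT : height a s T = -1) : height a s (hitTime a s) = -1 :=
  Nat.sInf_mem (s := {k | height a s k = -1}) ⟨T, hT⟩

theorem height_reflect_self (hT : height a s T = -1) (hTm : T ≤ m) :
    height (-a - 2) (reflect a s) m = height a s m :=
  height_flipBefore_of_ge (height_hitTime hT) ((hitTime_le hT).trans hTm)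
    ((hitTime_le hT).trans hTm)

theorem hitTime_reflect (hT : height a s T = -1) (hTm : T ≤ m) :
    hitTime (-a - 2) (reflect a s) = hitTime a s :=
  sInf_setOf_eq_of_iff (height_hitTime hT) fun k hk => by
    rw [reflect, height_flipBefore_of_le ((hitTime_le hT).trans hTm) hk]
    omega

theorem reflect_reflect (hT : height a s T = -1) (hTm : T ≤ m) :
    reflect (-a - 2) (reflect a s) = s := by
  rw [reflect, hitTime_reflect hT hTm, reflect, flipBefore_flipBefore]

theorem height_reflect_hitTime (hT : height a s T = -1) (hTm : T ≤ m) :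
    height (-a - 2) (reflect a s) (hitTime a s) = -1 := by
  rw [← height_hitTime hT]
  exact height_flipBefore_of_ge (height_hitTime hT) ((hitTime_le hT).trans hTm) le_rfl

end Reflection

theorem card_walks_eq_card_nonnegWalks_add {a b : ℤ} (ha : 0 ≤ a) (hb : 0 ≤ b) :
    #(walks m a b) = #(nonnegWalks m a b) + #(walks m (-a - 2) b) := by
  rw [nonnegWalks, ← card_filter_add_card_filter_not (s := walks m a b)
    (p := fun s => ∀ k ≤ m, 0 ≤ height a s k)]
  congr 1
  have hit_of_bad : ∀ s ∈ {s ∈ walks m a b | ¬∀ k ≤ m, 0 ≤ height a s k},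
      ∃ T ≤ m, height a s T = -1 := fun s hs => by
    simp only [mem_filter, not_forall, not_le] at hs
    obtain ⟨-, K, hKm, hK⟩ := hs
    obtain ⟨T, hTK, hT⟩ := exists_eq_of_le_of_step (height a s) (height_succ_ge s a)
      (by simpa using (by omega : (-1 : ℤ) ≤ a)) K (by omega)
    exact ⟨T, hTK.trans hKm, hT⟩
  have hit_of_reflected : ∀ t ∈ walks m (-a - 2) b, ∃ T ≤ m, height (-a - 2) t T = -1 :=
    fun t ht => by
    simp only [walks, mem_filter, mem_univ, true_and] at ht
    obtain ⟨T, hTm, hT⟩ := exists_eq_of_le_of_step (fun k => -height (-a - 2) t k)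
      (fun k => by have := height_succ_le t (-a - 2) k; omega) (c := 1)
      (by simp only [height_zero]; omega) m (by omega)
    exact ⟨T, hTm, by omega⟩
  have ha' : -(-a - 2) - 2 = a := by ring
  refine card_bij' (fun s _ => reflect a s) (fun t _ => reflect (-a - 2) t) ?_ ?_ ?_ ?_
  · intro s hs
    obtain ⟨T, hTm, hT⟩ := hit_of_bad s hs
    simp only [walks, mem_filter, mem_univ, true_and] at hs ⊢
    rw [height_reflect_self hT hTm, hs.1]
  · intro t ht
    obtain ⟨T, hTm, hT⟩ := hit_of_reflected t ht
    simp only [walks, mem_filter, mem_univ, true_and, not_forall, not_le] at ht ⊢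
    have hend := height_reflect_self hT hTm
    have hhit := height_reflect_hitTime hT hTm
    rw [ha'] at hend hhit
    exact ⟨hend.trans ht, _, (hitTime_le hT).trans hTm, by omega⟩
  · intro s hs
    obtain ⟨T, hTm, hT⟩ := hit_of_bad s hs
    exact reflect_reflect hT hTm
  · intro t ht
    obtain ⟨T, hTm, hT⟩ := hit_of_reflected t ht
    simpa only [ha'] using reflect_reflect hT hTm

def tailSwap (T : ℕ) (f g : Fin m → Bool) : Fin m → Bool :=
  fun i => if (i : ℕ) < T then f i else g i

section TailSwap

variable {a a' : ℤ} {f g : Fin m → Bool} {T k : ℕ}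

theorem height_tailSwap_of_le (hk : k ≤ T) : height a (tailSwap T f g) k = height a f k :=
  height_eq_of_eqOn_prefix a (fun _ hi => if_pos hi) hk

theorem height_tailSwap_of_ge (hT : height a f T = height a' g T) (hk : T ≤ k) :
    height a (tailSwap T f g) k = height a' g k := by
  have := height_sub_eq_of_eqOn_suffix (s := tailSwap T f g) a a'
    (fun i hi => if_neg (not_lt.mpr hi)) hk
  rw [height_tailSwap_of_le le_rfl] at this
  omega

theorem exists_height_eq_of_lt_of_le (ha : a < a') (hpar : Even (a' - a)) {K : ℕ}
    (hK : height a' g K ≤ height a f K) : ∃ T ≤ K, height a f T = height a' g T := by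
  obtain ⟨d, hd⟩ := hpar
  have hgap : ∀ k, height a' g k - height a f k = 2 * (d + upCount g k - upCount f k) :=
    fun k => by simp only [height]; omega
  obtain ⟨T, hTK, hT⟩ := exists_eq_of_le_of_step (fun k => d + upCount g k - upCount f k)
    (fun k => by simp only [upCount_succ]; have := upStep_le_one f k; omega) (c := 0)
    (by simp [upCount]; omega) K (by have := hgap K; omega)
  exact ⟨T, hTK, by have := hgap T; omega⟩

noncomputable def firstMeet (a a' : ℤ) (f g : Fin m → Bool) : ℕ :=
  sInf {k | height a f k = height a' g k}

/-- Gessel–Viennot involution: exchange the tails of two walks after they first meet. -/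
noncomputable def switch (a a' : ℤ) (fg : (Fin m → Bool) × (Fin m → Bool)) :
    (Fin m → Bool) × (Fin m → Bool) :=
  (tailSwap (firstMeet a a' fg.1 fg.2) fg.1 fg.2, tailSwap (firstMeet a a' fg.1 fg.2) fg.2 fg.1)

theorem firstMeet_le (hT : height a f T = height a' g T) : firstMeet a a' f g ≤ T :=
  Nat.sInf_le hT

theorem height_firstMeet (hT : height a f T = height a' g T) :
    height a f (firstMeet a a' f g) = height a' g (firstMeet a a' f g) :=
  Nat.sInf_mem (s := {k | height a f k = height a' g k}) ⟨T, hT⟩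

theorem firstMeet_switch (hT : height a f T = height a' g T) :
    firstMeet a a' (switch a a' (f, g)).1 (switch a a' (f, g)).2 = firstMeet a a' f g :=
  sInf_setOf_eq_of_iff (height_firstMeet hT) fun k hk => by
    rw [switch, height_tailSwap_of_le hk, height_tailSwap_of_le hk]

theorem switch_switch (hT : height a f T = height a' g T) :
    switch a a' (switch a a' (f, g)) = (f, g) := by
  rw [switch, firstMeet_switch hT]
  ext i <;> simp only [switch, tailSwap] <;> split <;> rfl

theorem height_switch_firstMeet (hT : height a f T = height a' g T) :
    height a (switch a a' (f, g)).1 (firstMeet a a' f g)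
      = height a' (switch a a' (f, g)).2 (firstMeet a a' f g) := by
  rw [switch, height_tailSwap_of_le le_rfl, height_tailSwap_of_le le_rfl, height_firstMeet hT]

theorem switch_mem_nonnegWalks {b b' : ℤ} (hT : height a f T = height a' g T) (hTm : T ≤ m)
    (hfg : (f, g) ∈ nonnegWalks m a b ×ˢ nonnegWalks m a' b') :
    switch a a' (f, g) ∈ nonnegWalks m a b' ×ˢ nonnegWalks m a' b := by
  simp only [nonnegWalks, walks, mem_product, mem_filter, mem_univ, true_and] at hfg ⊢
  obtain ⟨⟨hfb, hf⟩, hgb, hg⟩ := hfg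
  have hM := height_firstMeet hT
  have hMm : firstMeet a a' f g ≤ m := (firstMeet_le hT).trans hTm
  simp only [switch]
  refine ⟨⟨?_, fun k hk => ?_⟩, ?_, fun k hk => ?_⟩
  · rw [height_tailSwap_of_ge hM hMm, hgb]
  · rcases le_total k (firstMeet a a' f g) with h | h
    · rw [height_tailSwap_of_le h]; exact hf k hk
    · rw [height_tailSwap_of_ge hM h]; exact hg k hk
  · rw [height_tailSwap_of_ge hM.symm hMm, hfb]
  · rcases le_total k (firstMeet a a' f g) with h | h
    · rw [height_tailSwap_of_le h]; exact hg k hk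
    · rw [height_tailSwap_of_ge hM.symm h]; exact hf k hk

end TailSwap

theorem card_nonnegWalks_mul_card {a a' b b' : ℤ} (ha : a < a') (hpar : Even (a' - a))
    (hb : b < b') :
    #(nonnegWalks m a b) * #(nonnegWalks m a' b')
      = #{fg ∈ nonnegWalks m a b ×ˢ nonnegWalks m a' b' |
          ∀ k ≤ m, height a fg.1 k ≠ height a' fg.2 k}
        + #(nonnegWalks m a b') * #(nonnegWalks m a' b) := by
  rw [← card_product, ← card_product, ← card_filter_add_card_filter_not
    (s := nonnegWalks m a b ×ˢ nonnegWalks m a' b')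
    (p := fun fg => ∀ k ≤ m, height a fg.1 k ≠ height a' fg.2 k)]
  congr 1
  have meet_of_crossing : ∀ f g, (f, g) ∈ nonnegWalks m a b' ×ˢ nonnegWalks m a' b →
      ∃ T ≤ m, height a f T = height a' g T := by
    intro f g hfg
    simp only [nonnegWalks, walks, mem_product, mem_filter, mem_univ, true_and] at hfg
    exact exists_height_eq_of_lt_of_le ha hpar (by omega)
  refine card_bij' (fun fg _ => switch a a' fg) (fun fg _ => switch a a' fg) ?_ ?_ ?_ ?_
  · rintro ⟨f, g⟩ hfg
    simp only [mem_filter, not_forall, not_not] at hfg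
    obtain ⟨hfg, T, hTm, hT⟩ := hfg
    exact switch_mem_nonnegWalks hT hTm hfg
  · rintro ⟨f, g⟩ hfg
    obtain ⟨T, hTm, hT⟩ := meet_of_crossing f g hfg
    simp only [mem_filter, not_forall, not_not]
    exact ⟨switch_mem_nonnegWalks hT hTm hfg, _, (firstMeet_le hT).trans hTm,
      height_switch_firstMeet hT⟩
  · rintro ⟨f, g⟩ hfg
    simp only [mem_filter, not_forall, not_not] at hfg
    obtain ⟨-, T, -, hT⟩ := hfg
    exact switch_switch hT
  · rintro ⟨f, g⟩ hfg
    obtain ⟨T, -, hT⟩ := meet_of_crossing f g hfg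
    exact switch_switch hT

/-- The lattice path from `a` taking an east step `(1,0)` for `true` and a north step `(0,1)`
for `false`; its height walk is `x - y`. -/
def pathOf (a : ℤ × ℤ) (f : Fin m → Bool) : Fin (m + 1) → ℤ × ℤ :=
  fun k => (a.1 + upCount f k, a.2 + k - upCount f k)

section Paths

variable {a : ℤ × ℤ} {f g : Fin m → Bool}

theorem pathOf_zero : pathOf a f 0 = a := by simp [pathOf, upCount]

theorem pathOf_succ (i : Fin m) :
    pathOf a f i.succ = pathOf a f i.castSucc + if f i then (1, 0) else (0, 1) := by
  have h := upCount_succ f i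
  simp only [upStep, i.isLt, dif_pos, Fin.eta] at h
  cases hfi : f i <;> ext <;> simp [pathOf, h, hfi] <;> ring

theorem isPathZ_pathOf : IsPathZ m a (pathOf a f (Fin.last m)) (pathOf a f) :=
  ⟨pathOf_zero, rfl, fun i => by rw [pathOf_succ]; cases f i <;> simp⟩

theorem pathOf_injective (a : ℤ × ℤ) : Function.Injective (pathOf (m := m) a) := by
  intro f g hfg
  funext i
  have h := pathOf_succ (a := a) (f := f) i
  rw [hfg, pathOf_succ, add_right_inj] at h
  revert h; cases f i <;> cases g i <;> simp

theorem exists_pathOf_eq {t : ℤ × ℤ} {p : Fin (m + 1) → ℤ × ℤ} (hp : IsPathZ m a t p) :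
    ∃ f, pathOf a f = p := by
  refine ⟨fun i => decide (p i.succ = p i.castSucc + (1, 0)), funext fun k => ?_⟩
  induction k using Fin.induction with
  | zero => rw [pathOf_zero, hp.1]
  | succ i ih =>
    rw [pathOf_succ, ih]
    rcases hp.2.2 i with h | h <;> simp [h]

theorem pathOf_sub (k : Fin (m + 1)) :
    (pathOf a f k).1 - (pathOf a f k).2 = height (a.1 - a.2) f k := by
  simp only [pathOf, height]; ring

theorem pathOf_add (k : Fin (m + 1)) : (pathOf a f k).1 + (pathOf a f k).2 = a.1 + a.2 + k := by
  simp only [pathOf]; ring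

theorem belowDiag_pathOf_iff :
    BelowDiag (pathOf a f) ↔ ∀ k ≤ m, 0 ≤ height (a.1 - a.2) f k := by
  refine ⟨fun h k hk => ?_, fun h k => ?_⟩
  · have := pathOf_sub (a := a) (f := f) ⟨k, by omega⟩
    have := h ⟨k, by omega⟩
    dsimp only at *
    omega
  · have := pathOf_sub (a := a) (f := f) k
    have := h k (Nat.lt_succ_iff.mp k.isLt)
    omega

theorem isPathZ_pathOf_iff {t : ℤ × ℤ} (ht : t.1 + t.2 = a.1 + a.2 + m) :
    IsPathZ m a t (pathOf a f) ↔ height (a.1 - a.2) f m = t.1 - t.2 := by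
  have hsub := pathOf_sub (a := a) (f := f) (Fin.last m)
  have hadd := pathOf_add (a := a) (f := f) (Fin.last m)
  simp only [Fin.val_last] at hsub hadd
  refine ⟨fun h => by rw [← hsub, h.2.1], fun h => ?_⟩
  have hend : pathOf a f (Fin.last m) = t := by ext <;> omega
  exact hend ▸ isPathZ_pathOf

theorem noninterZ_pathOf_iff {a' : ℤ × ℤ} (ha : a'.1 + a'.2 = a.1 + a.2) :
    NoninterZ (pathOf a f) (pathOf a' g)
      ↔ ∀ k ≤ m, height (a.1 - a.2) f k ≠ height (a'.1 - a'.2) g k := by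
  refine ⟨fun h k hk heq => h ⟨k, by omega⟩ ⟨k, by omega⟩ ?_, fun h i j heq => ?_⟩
  · have := pathOf_sub (a := a) (f := f) ⟨k, by omega⟩
    have := pathOf_sub (a := a') (f := g) ⟨k, by omega⟩
    have := pathOf_add (a := a) (f := f) ⟨k, by omega⟩
    have := pathOf_add (a := a') (f := g) ⟨k, by omega⟩
    ext <;> simp_all only <;> omega
  · have hi := pathOf_add (a := a) (f := f) i
    have hj := pathOf_add (a := a') (f := g) j
    have hij : i = j := Fin.ext (by rw [heq] at hi; omega)
    subst hij
    have := pathOf_sub (a := a) (f := f) i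
    have := pathOf_sub (a := a') (f := g) i
    exact h i (Nat.lt_succ_iff.mp i.isLt) (by rw [heq] at *; omega)

end Paths

theorem card_noninter_pathPairs {a a' t t' : ℤ × ℤ} (ha : a'.1 + a'.2 = a.1 + a.2)
    (ht : t.1 + t.2 = a.1 + a.2 + m) (ht' : t'.1 + t'.2 = a'.1 + a'.2 + m) :
    Nat.card {pr : (Fin (m + 1) → ℤ × ℤ) × (Fin (m + 1) → ℤ × ℤ) //
        IsPathZ m a t pr.1 ∧ IsPathZ m a' t' pr.2 ∧
        BelowDiag pr.1 ∧ BelowDiag pr.2 ∧ NoninterZ pr.1 pr.2}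
      = #{fg ∈ nonnegWalks m (a.1 - a.2) (t.1 - t.2) ×ˢ
            nonnegWalks m (a'.1 - a'.2) (t'.1 - t'.2) |
          ∀ k ≤ m, height (a.1 - a.2) fg.1 k ≠ height (a'.1 - a'.2) fg.2 k} := by
  set walkPairs := {fg ∈ nonnegWalks m (a.1 - a.2) (t.1 - t.2) ×ˢ
    nonnegWalks m (a'.1 - a'.2) (t'.1 - t'.2) |
      ∀ k ≤ m, height (a.1 - a.2) fg.1 k ≠ height (a'.1 - a'.2) fg.2 k}
  have hmem : ∀ f g, (f, g) ∈ walkPairs ↔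
      IsPathZ m a t (pathOf a f) ∧ IsPathZ m a' t' (pathOf a' g) ∧
        BelowDiag (pathOf a f) ∧ BelowDiag (pathOf a' g) ∧
        NoninterZ (pathOf a f) (pathOf a' g) := fun f g => by
    simp only [walkPairs, nonnegWalks, walks, mem_filter, mem_product, mem_univ, true_and,
      isPathZ_pathOf_iff ht, isPathZ_pathOf_iff ht', belowDiag_pathOf_iff,
      noninterZ_pathOf_iff ha]
    tauto
  have himage : {pr : (Fin (m + 1) → ℤ × ℤ) × (Fin (m + 1) → ℤ × ℤ) |
        IsPathZ m a t pr.1 ∧ IsPathZ m a' t' pr.2 ∧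
        BelowDiag pr.1 ∧ BelowDiag pr.2 ∧ NoninterZ pr.1 pr.2}
      = Prod.map (pathOf a) (pathOf a') '' walkPairs := by
    ext ⟨p, q⟩
    refine ⟨fun hpq => ?_, ?_⟩
    · obtain ⟨f, rfl⟩ := exists_pathOf_eq hpq.1
      obtain ⟨g, rfl⟩ := exists_pathOf_eq hpq.2.1
      exact ⟨(f, g), (hmem f g).2 hpq, rfl⟩
    · rintro ⟨⟨f, g⟩, hfg, h⟩
      cases h
      exact (hmem f g).1 hfg
  rw [← Set.ncard_coe_finset, ← Set.ncard_image_of_injective _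
    ((pathOf_injective a).prodMap (pathOf_injective a')), ← himage]
  rfl

theorem card_noninter_walks (n : ℕ) :
    (#{fg ∈ nonnegWalks (2 * n) 0 0 ×ˢ nonnegWalks (2 * n) 2 2 |
        ∀ k ≤ 2 * n, height 0 fg.1 k ≠ height 2 fg.2 k} : ℤ)
      = (((2 * n).choose n : ℤ) - (2 * n).choose (n + 1))
          * ((2 * n).choose n - (2 * n).choose (n + 3))
        - ((2 * n).choose (n + 1) - (2 * n).choose (n + 2)) ^ 2 := by
  have lgv := card_nonnegWalks_mul_card (m := 2 * n) (a := 0) (a' := 2) (b := 0) (b' := 2)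
    (by norm_num) (by norm_num) (by norm_num)
  have ballot : ∀ a b : ℤ, 0 ≤ a → 0 ≤ b →
      (#(nonnegWalks (2 * n) a b) : ℤ) = #(walks (2 * n) a b) - #(walks (2 * n) (-a - 2) b) :=
    fun a b ha hb => by rw [card_walks_eq_card_nonnegWalks_add ha hb]; push_cast; ring
  have h00 : (#(nonnegWalks (2 * n) 0 0) : ℤ) = (2 * n).choose n - (2 * n).choose (n + 1) := by
    rw [ballot 0 0 le_rfl le_rfl, card_walks (c := n) (by push_cast; ring),
      card_walks (c := n + 1) (by push_cast; ring)]
  have h22 : (#(nonnegWalks (2 * n) 2 2) : ℤ) = (2 * n).choose n - (2 * n).choose (n + 3) := by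
    rw [ballot 2 2 (by norm_num) (by norm_num), card_walks (c := n) (by push_cast; ring),
      card_walks (c := n + 3) (by push_cast; ring)]
  have h02 : (#(nonnegWalks (2 * n) 0 2) : ℤ)
      = (2 * n).choose (n + 1) - (2 * n).choose (n + 2) := by
    rw [ballot 0 2 le_rfl (by norm_num), card_walks (c := n + 1) (by push_cast; ring),
      card_walks (c := n + 2) (by push_cast; ring)]
  -- Counting by up-steps would give `C(2n, n - 1)`, which truncates wrongly at `n = 0`.
  have h20 : (#(nonnegWalks (2 * n) 2 0) : ℤ)
      = (2 * n).choose (n + 1) - (2 * n).choose (n + 2) := by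
    rw [ballot 2 0 (by norm_num) le_rfl, card_walks_neg,
      card_walks (c := n + 1) (by push_cast; ring), card_walks (c := n + 2) (by push_cast; ring)]
  have := congrArg (Nat.cast : ℕ → ℤ) lgv
  push_cast at this
  rw [h00, h22, h02, h20] at this
  linear_combination -this

end LatticeWalk

open LatticeWalk in
theorem noninter_dyck_pairs (n : ℕ) :
    (Nat.card {pr : (Fin (2 * n + 1) → ℤ × ℤ) × (Fin (2 * n + 1) → ℤ × ℤ) //
        IsPathZ (2 * n) (0, 0) (n, n) pr.1 ∧
        IsPathZ (2 * n) (1, -1) ((n : ℤ) + 1, (n : ℤ) - 1) pr.2 ∧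
        BelowDiag pr.1 ∧ BelowDiag pr.2 ∧ NoninterZ pr.1 pr.2} : ℤ)
      = (catalan (n + 2) : ℤ) * (catalan n : ℤ) - (catalan (n + 1) : ℤ) ^ 2 := by
  rw [card_noninter_pathPairs (by norm_num) (by push_cast; ring) (by push_cast; ring)]
  norm_num only [sub_self, sub_neg_eq_add, add_sub_sub_cancel]
  rw [card_noninter_walks, ballot_det_eq_catalan_det]
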